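/- Let H be a finite simple graph, v a non-isolated vertex of H, and G = Tr(H,v) with new vertices a, b, c. For each i ≥ 0, the number of independent sets F of G with |F| = i and F ∩ {a,b,c} = {c} equals a_{i−1}(H_v) + a_{i−2}(H_v), where a_j(H_v) is the number of independent sets of H_v of size j (a_j = 0 for j < 0). Specifically, such F with v ∈ F correspond bijectively to independent sets of H_v of size i − 2, and such F with v ∉ F correspond bijectively to independent sets of H_v of size i − 1. -/

import Mathlib

open scoped Classical

/-- A finset of vertices is independent if no two of its members are adjacent. -/
def IsIndep {W : Type*} (G : SimpleGraph W) (s : Finset W) : Prop :=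
  ∀ x ∈ s, ∀ y ∈ s, ¬ G.Adj x y

/-- A maximal independent set: independent and not properly contained in another
independent set. -/
def IsMaxIndep {W : Type*} (G : SimpleGraph W) (s : Finset W) : Prop :=
  IsIndep G s ∧ ∀ t : Finset W, IsIndep G t → s ⊆ t → t = s

/-- The independence number `α(G)`: the maximum size of an independent set. -/
noncomputable def indepNum {W : Type*} (G : SimpleGraph W) [Fintype W] : ℕ :=
  sSup {n | ∃ s : Finset W, IsIndep G s ∧ s.card = n}

/-- Trung's construction `Tr(H, v)`: three new vertices `a = Sum.inr 0`, `b = Sum.inr 1`,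
`c = Sum.inr 2` are added to `H`; `c` is joined to `b` and to every neighbor of `v`,
`b` is joined to `a`, and `a` is joined to `v`. -/
def Tr {V : Type*} (H : SimpleGraph V) (v : V) : SimpleGraph (V ⊕ Fin 3) :=
  SimpleGraph.fromRel (fun x y =>
    match x, y with
    | Sum.inl x, Sum.inl y => H.Adj x y
    | Sum.inl x, Sum.inr i => (i = 0 ∧ x = v) ∨ (i = 2 ∧ H.Adj x v)
    | Sum.inr i, Sum.inr j => (i = 0 ∧ j = 1) ∨ (i = 1 ∧ j = 2)
    | _, _ => False)

/-- The set of vertices remaining after deleting the closed neighborhood `N[F]`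
of a set `F` of vertices. -/
def offNbhd {V : Type*} (G : SimpleGraph V) (F : Set V) : Set V :=
  {w | w ∉ F ∧ ∀ u ∈ F, ¬ G.Adj u w}

/-- `G_F`: the induced subgraph of `G` on `V(G) \ N[F]`. -/
def delNbhd {V : Type*} (G : SimpleGraph V) (F : Set V) : SimpleGraph (offNbhd G F) :=
  G.induce (offNbhd G F)

/-- `H_v = H \ N[v]`. -/
def delVert {V : Type*} (H : SimpleGraph V) (v : V) : SimpleGraph (offNbhd H {v}) :=
  delNbhd H {v}

/-- The independence polynomial `I(G, x) = Σ_i a_i x^i` of a finite graph,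
as a polynomial over `ℚ`. -/
noncomputable def indepPoly {W : Type*} (G : SimpleGraph W) [Fintype W] : Polynomial ℚ :=
  ∑ s ∈ Finset.univ.filter (fun s : Finset W => IsIndep G s),
    (Polynomial.X : Polynomial ℚ) ^ s.card

/-- `a_i(G)`: the number of independent sets of size `i`, indexed by `ℤ`
(so that it is `0` for `i < 0`). -/
noncomputable def numIndep {W : Type*} (G : SimpleGraph W) [Fintype W] (i : ℤ) : ℕ :=
  (Finset.univ.filter (fun s : Finset W => IsIndep G s ∧ (s.card : ℤ) = i)).card

/-- A finite graph is well-covered if every maximal independent set has size `α(G)`. -/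
def WellCovered {W : Type*} (G : SimpleGraph W) [Fintype W] : Prop :=
  ∀ s : Finset W, IsMaxIndep G s → s.card = indepNum G

/-- A finite graph is a `W₂` graph if it has at least two vertices and every pair of
disjoint independent sets is contained in a pair of disjoint maximum independent sets. -/
def IsW2 {W : Type*} (G : SimpleGraph W) [Fintype W] : Prop :=
  2 ≤ Fintype.card W ∧
    ∀ A B : Finset W, IsIndep G A → IsIndep G B → Disjoint A B →
      ∃ A' B' : Finset W, IsIndep G A' ∧ IsIndep G B' ∧ Disjoint A' B' ∧
        A ⊆ A' ∧ B ⊆ B' ∧ A'.card = indepNum G ∧ B'.card = indepNum G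

/-
An independent set `F` of `Tr(H, v)` with `F ∩ {a, b, c} = {c}` has, besides `c`, only vertices
of `H`, none of them adjacent to `v` since `c` is joined to all of `N_H(v)`. Hence `F ∖ {c, v}`
lies in `V(H_v)` and is independent there. Conversely, `v` has no neighbour in `V(H_v)` and `c`
none in `V(H_v) ∪ {v}`, so every independent set of `H_v`, with `c` and with or without `v`
added, is such an `F`. Thus `F ↦ F ∩ V(H_v)` is a bijection in either case, lowering the size
by 2 when `v ∈ F` and by 1 otherwise.
-/

open Finset Sum Function

lemma isIndep_insert {W : Type*} [DecidableEq W] {G : SimpleGraph W} {a : W} {s : Finset W} :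
    IsIndep G (insert a s) ↔ IsIndep G s ∧ ∀ x ∈ s, ¬ G.Adj a x := by
  simp +contextual [IsIndep, G.adj_comm _ a, forall_and, and_comm]

lemma isIndep_induce_iff {W : Type*} {G : SimpleGraph W} {A : Set W} {s : Finset A} :
    IsIndep (G.induce A) s ↔ IsIndep G (s.map (Embedding.subtype _)) := by
  simp [IsIndep]

lemma IsIndep.mono {W : Type*} {G : SimpleGraph W} {s t : Finset W} (hs : IsIndep G s)
    (hts : t ⊆ s) : IsIndep G t :=
  fun x hx y hy => hs x (hts hx) y (hts hy)

lemma card_map_disjSum_singleton {α β : Type*} {p : α → Prop} (s : Finset (Subtype p))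
    (b : β) :
    #((s.map (Embedding.subtype _)).disjSum {b}) = #s + 1 := by
  rw [card_disjSum, card_map, card_singleton]

lemma card_insert_map_disjSum_singleton {α β : Type*} [DecidableEq α] {p : α → Prop} {a : α}
    (ha : ¬ p a) (s : Finset (Subtype p)) (b : β) :
    #((insert a (s.map (Embedding.subtype _))).disjSum {b}) = #s + 2 := by
  rw [card_disjSum, card_insert_of_notMem (notMem_map_subtype_of_not_property _ ha), card_map,
    card_singleton]

section Trung

variable {V : Type*} {H : SimpleGraph V} {v : V}

@[simp] lemma tr_adj_inl_inl {x y : V} : (Tr H v).Adj (inl x) (inl y) ↔ H.Adj x y := by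
  simp only [Tr, SimpleGraph.fromRel_adj, ne_eq, inl.injEq]
  exact ⟨fun ⟨_, h⟩ => h.elim id .symm, fun h => ⟨h.ne, .inl h⟩⟩

@[simp] lemma tr_adj_inl_c {x : V} : (Tr H v).Adj (inl x) (inr 2) ↔ H.Adj x v := by
  simp [Tr]

@[simp] lemma tr_adj_c_inl {x : V} : (Tr H v).Adj (inr 2) (inl x) ↔ H.Adj x v := by
  rw [SimpleGraph.adj_comm, tr_adj_inl_c]

lemma IsIndep.toLeft_of_tr {F : Finset (V ⊕ Fin 3)} (hF : IsIndep (Tr H v) F) :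
    IsIndep H F.toLeft :=
  fun _ hx _ hy hxy => hF _ (mem_toLeft.1 hx) _ (mem_toLeft.1 hy) (tr_adj_inl_inl.2 hxy)

lemma isIndep_tr_disjSum_singleton_iff {S : Finset V} :
    IsIndep (Tr H v) (S.disjSum {2}) ↔ IsIndep H S ∧ ∀ x ∈ S, ¬ H.Adj x v := by
  simp +contextual [IsIndep, Sum.forall, forall_and]

lemma mem_offNbhd_singleton {w : V} : w ∈ offNbhd H {v} ↔ w ≠ v ∧ ¬ H.Adj v w := by
  simp [offNbhd]

lemma notMem_offNbhd_singleton : v ∉ offNbhd H {v} :=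
  fun h => (mem_offNbhd_singleton.1 h).1 rfl

lemma isIndep_delVert_iff {s : Finset (offNbhd H {v})} :
    IsIndep (delVert H v) s ↔ IsIndep H (s.map (Embedding.subtype _)) :=
  isIndep_induce_iff

variable (H v) in
noncomputable def restrictOffNbhd (F : Finset (V ⊕ Fin 3)) : Finset (offNbhd H {v}) :=
  F.toLeft.subtype (· ∈ offNbhd H {v})

lemma isIndep_restrictOffNbhd {F : Finset (V ⊕ Fin 3)} (hF : IsIndep (Tr H v) F) :
    IsIndep (delVert H v) (restrictOffNbhd H v F) := by
  rw [isIndep_delVert_iff, restrictOffNbhd, subtype_map]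
  exact hF.toLeft_of_tr.mono (filter_subset _ _)

lemma restrictOffNbhd_disjSum (s : Finset (offNbhd H {v})) :
    restrictOffNbhd H v ((s.map (Embedding.subtype _)).disjSum {2}) = s := by
  ext w
  simp [restrictOffNbhd]

variable [DecidableEq V]

lemma map_subtype_restrictOffNbhd {F : Finset (V ⊕ Fin 3)} (hF : IsIndep (Tr H v) F)
    (hc : inr 2 ∈ F) :
    (restrictOffNbhd H v F).map (Embedding.subtype _) = F.toLeft.erase v := by
  ext w
  have : inl w ∈ F → ¬ H.Adj v w := fun hw hvw => hF _ hw _ hc (tr_adj_inl_c.2 hvw.symm)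
  simp only [restrictOffNbhd, subtype_map, mem_filter, mem_toLeft, mem_erase,
    mem_offNbhd_singleton]
  tauto

lemma inter_inr_eq_singleton_iff {F : Finset (V ⊕ Fin 3)} :
    F ∩ {inr 0, inr 1, inr 2} = {inr 2} ↔ F.toRight = {2} := by
  simp [Finset.ext_iff, Sum.forall, Fin.forall_fin_succ]

lemma restrictOffNbhd_insert_disjSum (s : Finset (offNbhd H {v})) :
    restrictOffNbhd H v ((insert v (s.map (Embedding.subtype _))).disjSum {2}) = s := by
  ext w
  simp [restrictOffNbhd, (mem_offNbhd_singleton.1 w.2).1]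

lemma isIndep_tr_insert_disjSum {s : Finset (offNbhd H {v})} (hs : IsIndep (delVert H v) s) :
    IsIndep (Tr H v) ((insert v (s.map (Embedding.subtype _))).disjSum {2}) := by
  have hoff : ∀ x ∈ s.map (Embedding.subtype _), ¬ H.Adj v x := fun x hx =>
    (mem_offNbhd_singleton.1 (property_of_mem_map_subtype s hx)).2
  rw [isIndep_tr_disjSum_singleton_iff, isIndep_insert, ← isIndep_delVert_iff]
  refine ⟨⟨hs, hoff⟩, ?_⟩
  simp only [mem_insert, forall_eq_or_imp, SimpleGraph.irrefl, not_false_eq_true, true_and]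
  exact fun x hx hxv => hoff x hx hxv.symm

lemma eq_insert_disjSum_restrictOffNbhd {F : Finset (V ⊕ Fin 3)} (hF : IsIndep (Tr H v) F)
    (hc : F.toRight = {2}) (hv : inl v ∈ F) :
    F = (insert v ((restrictOffNbhd H v F).map (Embedding.subtype _))).disjSum {2} := by
  rw [eq_disjSum_iff, map_subtype_restrictOffNbhd hF (by simp [← mem_toRight, hc]),
    insert_erase (mem_toLeft.2 hv)]
  exact ⟨rfl, hc⟩

lemma eq_disjSum_restrictOffNbhd {F : Finset (V ⊕ Fin 3)} (hF : IsIndep (Tr H v) F)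
    (hc : F.toRight = {2}) (hv : inl v ∉ F) :
    F = ((restrictOffNbhd H v F).map (Embedding.subtype _)).disjSum {2} := by
  rw [eq_disjSum_iff, map_subtype_restrictOffNbhd hF (by simp [← mem_toRight, hc]),
    erase_eq_of_notMem (mt mem_toLeft.1 hv)]
  exact ⟨rfl, hc⟩

lemma card_restrictOffNbhd_add_two {F : Finset (V ⊕ Fin 3)} (hF : IsIndep (Tr H v) F)
    (hc : F.toRight = {2}) (hv : inl v ∈ F) : #(restrictOffNbhd H v F) + 2 = #F := by
  conv_rhs => rw [eq_insert_disjSum_restrictOffNbhd hF hc hv]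
  exact (card_insert_map_disjSum_singleton notMem_offNbhd_singleton _ _).symm

lemma card_restrictOffNbhd_add_one {F : Finset (V ⊕ Fin 3)} (hF : IsIndep (Tr H v) F)
    (hc : F.toRight = {2}) (hv : inl v ∉ F) : #(restrictOffNbhd H v F) + 1 = #F := by
  conv_rhs => rw [eq_disjSum_restrictOffNbhd hF hc hv]
  exact (card_map_disjSum_singleton _ _).symm

variable (H v) in
noncomputable def trIndepWithVEquiv (i : ℤ) :
    {F : Finset (V ⊕ Fin 3) // IsIndep (Tr H v) F ∧ (F.card : ℤ) = i ∧
        F ∩ ({Sum.inr 0, Sum.inr 1, Sum.inr 2} : Finset (V ⊕ Fin 3)) = {Sum.inr 2} ∧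
        Sum.inl v ∈ F} ≃
      {s : Finset (offNbhd H {v}) // IsIndep (delVert H v) s ∧ (s.card : ℤ) = i - 2} where
  toFun F := ⟨restrictOffNbhd H v F, isIndep_restrictOffNbhd F.2.1, by
    obtain ⟨F, hF, rfl, hc, hv⟩ := F
    dsimp only
    have := card_restrictOffNbhd_add_two hF (inter_inr_eq_singleton_iff.1 hc) hv
    omega⟩
  invFun s := ⟨(insert v (s.1.map (Embedding.subtype _))).disjSum {2},
    isIndep_tr_insert_disjSum s.2.1,
    by rw [card_insert_map_disjSum_singleton notMem_offNbhd_singleton]; have := s.2.2; omega,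
    by rw [inter_inr_eq_singleton_iff, toRight_disjSum], by simp⟩
  left_inv F := by
    obtain ⟨F, hF, -, hc, hv⟩ := F
    exact Subtype.ext
      (eq_insert_disjSum_restrictOffNbhd hF (inter_inr_eq_singleton_iff.1 hc) hv).symm
  right_inv s := Subtype.ext (restrictOffNbhd_insert_disjSum s.1)

variable (H v) in
noncomputable def trIndepWithoutVEquiv (i : ℤ) :
    {F : Finset (V ⊕ Fin 3) // IsIndep (Tr H v) F ∧ (F.card : ℤ) = i ∧
        F ∩ ({Sum.inr 0, Sum.inr 1, Sum.inr 2} : Finset (V ⊕ Fin 3)) = {Sum.inr 2} ∧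
        Sum.inl v ∉ F} ≃
      {s : Finset (offNbhd H {v}) // IsIndep (delVert H v) s ∧ (s.card : ℤ) = i - 1} where
  toFun F := ⟨restrictOffNbhd H v F, isIndep_restrictOffNbhd F.2.1, by
    obtain ⟨F, hF, rfl, hc, hv⟩ := F
    dsimp only
    have := card_restrictOffNbhd_add_one hF (inter_inr_eq_singleton_iff.1 hc) hv
    omega⟩
  invFun s := ⟨(s.1.map (Embedding.subtype _)).disjSum {2},
    (isIndep_tr_insert_disjSum s.2.1).mono (disjSum_mono (subset_insert _ _) subset_rfl),
    by rw [card_map_disjSum_singleton]; have := s.2.2; omega,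
    by rw [inter_inr_eq_singleton_iff, toRight_disjSum],
    by rw [inl_mem_disjSum]; exact notMem_map_subtype_of_not_property _ notMem_offNbhd_singleton⟩
  left_inv F := by
    obtain ⟨F, hF, -, hc, hv⟩ := F
    exact Subtype.ext (eq_disjSum_restrictOffNbhd hF (inter_inr_eq_singleton_iff.1 hc) hv).symm
  right_inv s := Subtype.ext (restrictOffNbhd_disjSum s.1)

end Trung

lemma numIndep_eq_card {W : Type*} [Fintype W] (G : SimpleGraph W) (i : ℤ) :
    numIndep G i = Fintype.card {s : Finset W // IsIndep G s ∧ (s.card : ℤ) = i} :=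
  (Fintype.card_subtype _).symm

theorem count_indep_Tr_with_c_general {V : Type*} [Fintype V] [DecidableEq V]
    (H : SimpleGraph V) (v : V) (i : ℤ) :
    (Finset.univ.filter (fun F : Finset (V ⊕ Fin 3) =>
        IsIndep (Tr H v) F ∧ (F.card : ℤ) = i ∧
          F ∩ ({Sum.inr 0, Sum.inr 1, Sum.inr 2} : Finset (V ⊕ Fin 3)) = {Sum.inr 2})).card =
      numIndep (delVert H v) (i - 1) + numIndep (delVert H v) (i - 2) ∧
    Nonempty
      ({F : Finset (V ⊕ Fin 3) // IsIndep (Tr H v) F ∧ (F.card : ℤ) = i ∧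
          F ∩ ({Sum.inr 0, Sum.inr 1, Sum.inr 2} : Finset (V ⊕ Fin 3)) = {Sum.inr 2} ∧
          Sum.inl v ∈ F} ≃
        {s : Finset (offNbhd H {v}) // IsIndep (delVert H v) s ∧ (s.card : ℤ) = i - 2}) ∧
    Nonempty
      ({F : Finset (V ⊕ Fin 3) // IsIndep (Tr H v) F ∧ (F.card : ℤ) = i ∧
          F ∩ ({Sum.inr 0, Sum.inr 1, Sum.inr 2} : Finset (V ⊕ Fin 3)) = {Sum.inr 2} ∧
          Sum.inl v ∉ F} ≃
        {s : Finset (offNbhd H {v}) // IsIndep (delVert H v) s ∧ (s.card : ℤ) = i - 1}) := by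
  refine ⟨?_, ⟨trIndepWithVEquiv H v i⟩, ⟨trIndepWithoutVEquiv H v i⟩⟩
  rw [add_comm, numIndep_eq_card, numIndep_eq_card,
    ← Fintype.card_congr (trIndepWithVEquiv H v i),
    ← Fintype.card_congr (trIndepWithoutVEquiv H v i), Fintype.card_subtype, Fintype.card_subtype,
    ← card_filter_add_card_filter_not (p := fun F => inl v ∈ F), filter_filter, filter_filter]
  simp only [and_assoc]

theorem count_indep_Tr_with_c {V : Type*} [Fintype V] [DecidableEq V]
    (H : SimpleGraph V) (v : V) (hv : ∃ u, H.Adj v u) (i : ℤ) (hi : 0 ≤ i) :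
    (Finset.univ.filter (fun F : Finset (V ⊕ Fin 3) =>
        IsIndep (Tr H v) F ∧ (F.card : ℤ) = i ∧
          F ∩ ({Sum.inr 0, Sum.inr 1, Sum.inr 2} : Finset (V ⊕ Fin 3)) = {Sum.inr 2})).card =
      numIndep (delVert H v) (i - 1) + numIndep (delVert H v) (i - 2) ∧
    Nonempty
      ({F : Finset (V ⊕ Fin 3) // IsIndep (Tr H v) F ∧ (F.card : ℤ) = i ∧
          F ∩ ({Sum.inr 0, Sum.inr 1, Sum.inr 2} : Finset (V ⊕ Fin 3)) = {Sum.inr 2} ∧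
          Sum.inl v ∈ F} ≃
        {s : Finset (offNbhd H {v}) // IsIndep (delVert H v) s ∧ (s.card : ℤ) = i - 2}) ∧
    Nonempty
      ({F : Finset (V ⊕ Fin 3) // IsIndep (Tr H v) F ∧ (F.card : ℤ) = i ∧
          F ∩ ({Sum.inr 0, Sum.inr 1, Sum.inr 2} : Finset (V ⊕ Fin 3)) = {Sum.inr 2} ∧
          Sum.inl v ∉ F} ≃
        {s : Finset (offNbhd H {v}) // IsIndep (delVert H v) s ∧ (s.card : ℤ) = i - 1}) :=
  count_indep_Tr_with_c_general H v i
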